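/- Let A = A(x,p) be a C² matrix-valued function satisfying the MTW condition D_{p_k p_l} A_{ij}(x,p) ξ_k ξ_l η_i η_j ≥ 0 for all ξ ⊥ η, and suppose additionally |D²_p A| ≤ C₀. Let w be symmetric positive definite with orthonormal eigenbasis {v^p} and eigenvalues λ_p > 0, and let ξ be a unit vector. Then w^{ij}(D_{p_kp_l}A_{ij}) w_{kξ} w_{lξ} ≥ −C₀' tr(w), where C₀' is a constant depending only on C₀ and n. -/

import Mathlib

open scoped RealInnerProductSpace

private lemma swap3 {N : ℕ} (f : Fin N → Fin N → Fin N → ℝ) :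
    ∑ a, ∑ b, ∑ c, f a b c = ∑ c, ∑ a, ∑ b, f a b c := by
  calc ∑ a, ∑ b, ∑ c, f a b c = ∑ a, ∑ c, ∑ b, f a b c :=
        Finset.sum_congr rfl fun a _ => Finset.sum_comm
    _ = ∑ c, ∑ a, ∑ b, f a b c := Finset.sum_comm

private lemma swap4 {N : ℕ} (f : Fin N → Fin N → Fin N → Fin N → ℝ) :
    ∑ a, ∑ b, ∑ c, ∑ d, f a b c d = ∑ d, ∑ a, ∑ b, ∑ c, f a b c d := by
  have h : ∀ a, ∑ b, ∑ c, ∑ d, f a b c d = ∑ d, ∑ b, ∑ c, f a b c d :=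
    fun a => swap3 (f a)
  rw [Finset.sum_congr rfl fun a _ => h a, Finset.sum_comm]

private lemma swap5 {N : ℕ} (f : Fin N → Fin N → Fin N → Fin N → Fin N → ℝ) :
    ∑ a, ∑ b, ∑ c, ∑ d, ∑ e, f a b c d e = ∑ e, ∑ a, ∑ b, ∑ c, ∑ d, f a b c d e := by
  have h : ∀ a, ∑ b, ∑ c, ∑ d, ∑ e, f a b c d e = ∑ e, ∑ b, ∑ c, ∑ d, f a b c d e :=
    fun a => swap4 (f a)
  rw [Finset.sum_congr rfl fun a _ => h a, Finset.sum_comm]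

private lemma pairswap {N : ℕ} (f : Fin N → Fin N → Fin N → Fin N → ℝ) :
    ∑ a, ∑ b, ∑ c, ∑ d, f a b c d = ∑ c, ∑ d, ∑ a, ∑ b, f a b c d := by
  rw [swap4 f]; rw [swap4 (fun d a b c => f a b c d)]

private lemma abs_bilin_le {N : ℕ} (B : Fin N → Fin N → ℝ) (a b : Fin N → ℝ) (K : ℝ)
    (hK : 0 ≤ K) (hB : ∀ k l, |B k l| ≤ K) :
    |∑ k, ∑ l, B k l * a k * b l| ≤ K * (∑ k, |a k|) * (∑ l, |b l|) := by
  calc |∑ k, ∑ l, B k l * a k * b l| ≤ ∑ k, |∑ l, B k l * a k * b l| :=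
        Finset.abs_sum_le_sum_abs _ _
    _ ≤ ∑ k, ∑ l, |B k l * a k * b l| :=
        Finset.sum_le_sum fun k _ => Finset.abs_sum_le_sum_abs _ _
    _ ≤ ∑ k, ∑ l, K * |a k| * |b l| := by
        refine Finset.sum_le_sum fun k _ => Finset.sum_le_sum fun l _ => ?_
        rw [abs_mul, abs_mul]
        exact mul_le_mul_of_nonneg_right
          (mul_le_mul_of_nonneg_right (hB k l) (abs_nonneg _)) (abs_nonneg _)
    _ = K * (∑ k, |a k|) * (∑ l, |b l|) := by
        simp only [Finset.sum_mul, Finset.mul_sum, mul_assoc]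
        rw [Finset.sum_comm]

private lemma bilin_expand {N : ℕ} (B : Fin N → Fin N → ℝ) (a vv : Fin N → ℝ) (d : ℝ) :
    ∑ k, ∑ l, B k l * (a k + d * vv k) * (a l + d * vv l)
      = (∑ k, ∑ l, B k l * a k * a l) + d * (∑ k, ∑ l, B k l * a k * vv l)
        + d * (∑ k, ∑ l, B k l * vv k * a l) + d ^ 2 * (∑ k, ∑ l, B k l * vv k * vv l) := by
  have h : ∀ k l, B k l * (a k + d * vv k) * (a l + d * vv l)
      = B k l * a k * a l + d * (B k l * a k * vv l) + d * (B k l * vv k * a l)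
        + d ^ 2 * (B k l * vv k * vv l) := fun k l => by ring
  simp_rw [h, Finset.sum_add_distrib, ← Finset.mul_sum]

private lemma neg_le_mul' (x y M : ℝ) (hx : |x| ≤ 1) (hy : |y| ≤ M) : -M ≤ x * y := by
  have h1 := neg_abs_le (x * y)
  have h2 : |x * y| ≤ M := by
    rw [abs_mul]
    calc |x| * |y| ≤ 1 * M := mul_le_mul hx hy (abs_nonneg _) one_pos.le
      _ = M := one_mul M
  linarith

private lemma neg_le_mul'' (z y M T : ℝ) (hz0 : 0 ≤ z) (hzT : z ≤ T) (hy : |y| ≤ M)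
    (hM : 0 ≤ M) : -(T * M) ≤ z * y := by
  nlinarith [mul_nonneg hz0 (by linarith [neg_abs_le y] : (0:ℝ) ≤ y + M),
    mul_nonneg (sub_nonneg.mpr hzT) hM]

set_option maxHeartbeats 2000000 in
/-- MTW algebraic step: if the tensor `Apq k l i j = D_{p_k p_l}A_{ij}` is symmetric, satisfies
`Apq ξ ξ η η ≥ 0` for `ξ ⊥ η` (A3w) and `|Apq| ≤ C₀`, then for every symmetric positive
definite `w` and unit vector `ξ`,
`w^{ij} (D_{p_k p_l}A_{ij}) w_{kξ} w_{lξ} ≥ −C'·tr w`, with `C'` depending only on `n`, `C₀`. -/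
theorem stmt_18 (n : ℕ) (C₀ : ℝ) (hC₀ : 0 < C₀) :
    ∃ C' > 0, ∀ (Apq : Fin n → Fin n → Fin n → Fin n → ℝ)
      (w : Matrix (Fin n) (Fin n) ℝ) (ξ : EuclideanSpace ℝ (Fin n)),
      (∀ k l i j, Apq k l i j = Apq l k i j) →
      (∀ k l i j, Apq k l i j = Apq k l j i) →
      (∀ k l i j, |Apq k l i j| ≤ C₀) →
      (∀ ζ η : EuclideanSpace ℝ (Fin n), ⟪ζ, η⟫ = 0 →
        0 ≤ ∑ k, ∑ l, ∑ i, ∑ j, Apq k l i j * ζ k * ζ l * η i * η j) →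
      w.PosDef → w.IsSymm → ‖ξ‖ = 1 →
      -C' * w.trace ≤ ∑ i, ∑ j, ∑ k, ∑ l,
        w⁻¹ i j * Apq k l i j * (∑ m, w k m * ξ m) * (∑ m, w l m * ξ m) := by
  refine ⟨5 * C₀ * (n : ℝ) ^ 5 + 1, by positivity, ?_⟩
  intro Apq w ξ hKL hIJ hbd hMTW hpd hsym hξ
  have hH : w.IsHermitian := hpd.1
  set lam : Fin n → ℝ := hH.eigenvalues with hlam
  set v : Fin n → EuclideanSpace ℝ (Fin n) := fun p => hH.eigenvectorBasis p with hv
  have hlampos : ∀ p, 0 < lam p := fun p => hpd.eigenvalues_pos p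
  have hinner : ∀ x y : EuclideanSpace ℝ (Fin n), ⟪x, y⟫ = ∑ m, x m * y m := fun x y => by
    simp [PiLp.inner_apply, RCLike.inner_apply, conj_trivial, mul_comm]
  have hOB : ∀ p q, (∑ m, v p m * v q m) = if p = q then 1 else 0 := by
    intro p q
    have h := orthonormal_iff_ite.mp hH.eigenvectorBasis.orthonormal p q
    rw [hinner] at h
    simpa using h
  have hvle : ∀ p m, |v p m| ≤ 1 := by
    intro p m
    have h2 : v p m * v p m ≤ 1 := by
      have h3 := Finset.single_le_sum (f := fun i => v p i * v p i)
        (fun i _ => mul_self_nonneg _) (Finset.mem_univ m)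
      simpa [hOB p p] using h3
    exact abs_le_one_iff_mul_self_le_one.mpr h2
  have hmulv : ∀ p k, (∑ m, w k m * v p m) = lam p * v p k := fun p k => by
    have h := congrFun (hH.mulVec_eigenvectorBasis p) k
    simpa [Matrix.mulVec, dotProduct] using h
  set c : Fin n → ℝ := fun q => ∑ m, v q m * ξ m with hc
  have hcle : ∀ q, |c q| ≤ 1 := by
    intro q
    have h := abs_real_inner_le_norm (v q) ξ
    rw [hinner] at h
    have h1 : ‖v q‖ = 1 := hH.eigenvectorBasis.orthonormal.1 q
    show |∑ m, v q m * ξ m| ≤ 1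
    rw [h1, hξ, one_mul] at h
    exact h
  have hrows : ∀ i j, (∑ p, v p i * v p j) = if i = j then 1 else 0 := by
    intro i j
    have hvp : ∀ p : Fin n, hH.eigenvectorBasis p = v p := fun p => rfl
    have h := hH.eigenvectorBasis.sum_inner_mul_inner
      (EuclideanSpace.single i (1:ℝ)) (EuclideanSpace.single j (1:ℝ))
    simp only [hinner, hvp] at h
    have h2 : ∀ p : Fin n, (∑ m, (EuclideanSpace.single i (1:ℝ)) m * v p m) *
        (∑ m, v p m * (EuclideanSpace.single j (1:ℝ)) m) = v p i * v p j := by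
      intro p
      simp [EuclideanSpace.single_apply]
    have h3 : (∑ m, (EuclideanSpace.single i (1:ℝ)) m * (EuclideanSpace.single j (1:ℝ)) m)
        = if i = j then 1 else 0 := by
      by_cases hij : i = j
      · subst hij; simp [EuclideanSpace.single_apply]
      · have h5 : ∀ m : Fin n, (EuclideanSpace.single i (1:ℝ)) m *
            (EuclideanSpace.single j (1:ℝ)) m = 0 := by
          intro m
          rw [EuclideanSpace.single_apply, EuclideanSpace.single_apply]
          by_cases h4 : m = i
          · subst h4; simp [hij]
          · rw [if_neg h4, zero_mul]
        simp only [h5, Finset.sum_const_zero, if_neg hij]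
    rw [← h3, ← h]
    exact Finset.sum_congr rfl fun p _ => (h2 p).symm
  have hxico : ∀ m, ξ m = ∑ q, c q * v q m := by
    intro m
    calc ξ m = ∑ r, ξ r * (if r = m then 1 else 0) := by simp
      _ = ∑ r, ξ r * ∑ q, v q r * v q m := by
          refine Finset.sum_congr rfl fun r _ => ?_
          rw [hrows r m]
      _ = ∑ r, ∑ q, ξ r * (v q r * v q m) := by
          refine Finset.sum_congr rfl fun r _ => ?_
          rw [Finset.mul_sum]
      _ = ∑ q, ∑ r, ξ r * (v q r * v q m) := Finset.sum_comm
      _ = ∑ q, c q * v q m := by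
          refine Finset.sum_congr rfl fun q _ => ?_
          show _ = (∑ r, v q r * ξ r) * v q m
          rw [Finset.sum_mul]
          exact Finset.sum_congr rfl fun r _ => by ring
  set u : Fin n → ℝ := fun k => ∑ m, w k m * ξ m with hu
  have huk : ∀ k, (∑ m, w k m * ξ m) = u k := fun k => rfl
  have huq : ∀ k, u k = ∑ q, lam q * c q * v q k := by
    intro k
    show (∑ m, w k m * ξ m) = _
    calc ∑ m, w k m * ξ m = ∑ m, ∑ q, w k m * (c q * v q m) := by
          refine Finset.sum_congr rfl fun m _ => ?_
          rw [hxico m, Finset.mul_sum]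
      _ = ∑ q, ∑ m, w k m * (c q * v q m) := Finset.sum_comm
      _ = ∑ q, c q * ∑ m, w k m * v q m := by
          refine Finset.sum_congr rfl fun q _ => ?_
          rw [Finset.mul_sum]
          exact Finset.sum_congr rfl fun m _ => by ring
      _ = ∑ q, lam q * c q * v q k := by
          refine Finset.sum_congr rfl fun q _ => ?_
          rw [hmulv q k]; ring
  have hwent : ∀ i j, w i j = ∑ q, lam q * (v q i * v q j) := by
    intro i j
    calc w i j = ∑ m, w i m * (if m = j then 1 else 0) := by simp
      _ = ∑ m, w i m * ∑ q, v q m * v q j := by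
          refine Finset.sum_congr rfl fun m _ => ?_
          rw [hrows m j]
      _ = ∑ m, ∑ q, w i m * (v q m * v q j) := by
          refine Finset.sum_congr rfl fun m _ => ?_
          rw [Finset.mul_sum]
      _ = ∑ q, ∑ m, w i m * (v q m * v q j) := Finset.sum_comm
      _ = ∑ q, v q j * ∑ m, w i m * v q m := by
          refine Finset.sum_congr rfl fun q _ => ?_
          rw [Finset.mul_sum]
          exact Finset.sum_congr rfl fun m _ => by ring
      _ = ∑ q, lam q * (v q i * v q j) := by
          refine Finset.sum_congr rfl fun q _ => ?_
          rw [hmulv q i]; ring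
  have htr : w.trace = ∑ p, lam p := by
    calc w.trace = ∑ i, w i i := rfl
      _ = ∑ i, ∑ q, lam q * (v q i * v q i) := Finset.sum_congr rfl fun i _ => hwent i i
      _ = ∑ q, ∑ i, lam q * (v q i * v q i) := Finset.sum_comm
      _ = ∑ q, lam q := by
          refine Finset.sum_congr rfl fun q _ => ?_
          rw [← Finset.mul_sum, hOB q q]
          simp
  have htrnn : 0 ≤ w.trace := by
    rw [htr]; exact Finset.sum_nonneg fun p _ => (hlampos p).le
  have hlamle : ∀ p, lam p ≤ w.trace := by
    intro p
    rw [htr]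
    exact Finset.single_le_sum (fun q _ => (hlampos q).le) (Finset.mem_univ p)
  have hinv : ∀ i j, w⁻¹ i j = ∑ p, (lam p)⁻¹ * (v p i * v p j) := by
    have hmain : w * (Matrix.of fun i j => ∑ p, (lam p)⁻¹ * (v p i * v p j)) = 1 := by
      ext i j
      rw [Matrix.mul_apply, Matrix.one_apply]
      calc ∑ k, w i k * (Matrix.of fun i j => ∑ p, (lam p)⁻¹ * (v p i * v p j)) k j
          = ∑ k, ∑ p, (lam p)⁻¹ * (w i k * v p k) * v p j := by
            refine Finset.sum_congr rfl fun k _ => ?_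
            rw [Matrix.of_apply, Finset.mul_sum]
            exact Finset.sum_congr rfl fun p _ => by ring
        _ = ∑ p, ∑ k, (lam p)⁻¹ * (w i k * v p k) * v p j := Finset.sum_comm
        _ = ∑ p, (lam p)⁻¹ * (∑ k, w i k * v p k) * v p j := by
            refine Finset.sum_congr rfl fun p _ => ?_
            rw [Finset.mul_sum, Finset.sum_mul]
        _ = ∑ p, v p i * v p j := by
            refine Finset.sum_congr rfl fun p _ => ?_
            rw [hmulv p i, inv_mul_cancel_left₀ (hlampos p).ne']
        _ = if i = j then 1 else 0 := hrows i j
    intro i j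
    rw [Matrix.inv_eq_right_inv hmain]
    rfl
  set B : Fin n → Fin n → Fin n → ℝ := fun p k l => ∑ i, ∑ j, Apq k l i j * v p i * v p j
    with hBdef
  have hvsum : ∀ p, (∑ m, |v p m|) ≤ (n:ℝ) := by
    intro p
    calc ∑ m, |v p m| ≤ ∑ _m : Fin n, (1:ℝ) := Finset.sum_le_sum fun m _ => hvle p m
      _ = n := by simp
  have hBbd : ∀ p k l, |B p k l| ≤ C₀ * (n:ℝ) ^ 2 := by
    intro p k l
    have h := abs_bilin_le (fun i j => Apq k l i j) (fun i => v p i) (fun j => v p j) C₀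
      hC₀.le (fun i j => hbd k l i j)
    calc |B p k l| ≤ C₀ * (∑ i, |v p i|) * (∑ j, |v p j|) := h
      _ ≤ C₀ * n * n := by
          have h1 : (0:ℝ) ≤ ∑ j, |v p j| := Finset.sum_nonneg fun j _ => abs_nonneg _
          have h2 : (0:ℝ) ≤ ∑ i, |v p i| := Finset.sum_nonneg fun i _ => abs_nonneg _
          have h3 := mul_le_mul_of_nonneg_right
            (mul_le_mul_of_nonneg_left (hvsum p) hC₀.le) h1
          have h4 := mul_le_mul_of_nonneg_left (hvsum p)
            (mul_nonneg hC₀.le (Nat.cast_nonneg n))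
          linarith
      _ = C₀ * (n:ℝ) ^ 2 := by ring
  have hul1 : (∑ k, |u k|) ≤ (n:ℝ) * w.trace := by
    have h1 : ∀ k, |u k| ≤ ∑ q, lam q := by
      intro k
      rw [huq k]
      calc |∑ q, lam q * c q * v q k| ≤ ∑ q, |lam q * c q * v q k| :=
            Finset.abs_sum_le_sum_abs _ _
        _ ≤ ∑ q, lam q := by
            refine Finset.sum_le_sum fun q _ => ?_
            rw [abs_mul, abs_mul, abs_of_pos (hlampos q)]
            have e1 : lam q * |c q| * |v q k| ≤ lam q * |c q| * 1 :=
              mul_le_mul_of_nonneg_left (hvle q k)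
                (mul_nonneg (hlampos q).le (abs_nonneg _))
            have e2 : lam q * |c q| ≤ lam q * 1 :=
              mul_le_mul_of_nonneg_left (hcle q) (hlampos q).le
            nlinarith
    calc ∑ k, |u k| ≤ ∑ _k : Fin n, ∑ q, lam q := Finset.sum_le_sum fun k _ => h1 k
      _ = (n:ℝ) * ∑ q, lam q := by
          rw [Finset.sum_const, Finset.card_univ, Fintype.card_fin, nsmul_eq_mul]
      _ = (n:ℝ) * w.trace := by rw [htr]
  have hS : (∑ i, ∑ j, ∑ k, ∑ l,
        w⁻¹ i j * Apq k l i j * (∑ m, w k m * ξ m) * (∑ m, w l m * ξ m))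
      = ∑ p, (lam p)⁻¹ * (∑ k, ∑ l, B p k l * u k * u l) := by
    calc (∑ i, ∑ j, ∑ k, ∑ l,
        w⁻¹ i j * Apq k l i j * (∑ m, w k m * ξ m) * (∑ m, w l m * ξ m))
        = ∑ i, ∑ j, ∑ k, ∑ l, ∑ p,
            (lam p)⁻¹ * (Apq k l i j * (v p i * v p j) * (u k * u l)) := by
          refine Finset.sum_congr rfl fun i _ => Finset.sum_congr rfl fun j _ =>
            Finset.sum_congr rfl fun k _ => Finset.sum_congr rfl fun l _ => ?_
          rw [huk k, huk l, hinv i j, Finset.sum_mul, Finset.sum_mul, Finset.sum_mul]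
          exact Finset.sum_congr rfl fun p _ => by ring
      _ = ∑ p, ∑ i, ∑ j, ∑ k, ∑ l,
            (lam p)⁻¹ * (Apq k l i j * (v p i * v p j) * (u k * u l)) := swap5 _
      _ = ∑ p, (lam p)⁻¹ * (∑ k, ∑ l, B p k l * u k * u l) := by
          refine Finset.sum_congr rfl fun p _ => ?_
          have hrhs : (lam p)⁻¹ * (∑ k, ∑ l, B p k l * u k * u l)
              = ∑ k, ∑ l, ∑ i, ∑ j,
                  (lam p)⁻¹ * (Apq k l i j * (v p i * v p j) * (u k * u l)) := by
            rw [Finset.mul_sum]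
            refine Finset.sum_congr rfl fun k _ => ?_
            rw [Finset.mul_sum]
            refine Finset.sum_congr rfl fun l _ => ?_
            show (lam p)⁻¹ * ((∑ i, ∑ j, Apq k l i j * v p i * v p j) * u k * u l) = _
            rw [Finset.sum_mul, Finset.sum_mul, Finset.mul_sum]
            refine Finset.sum_congr rfl fun i _ => ?_
            rw [Finset.sum_mul, Finset.sum_mul, Finset.mul_sum]
            refine Finset.sum_congr rfl fun j _ => ?_
            ring
          rw [hrhs]
          exact pairswap _
  have key : ∀ p, -(5 * C₀ * (n:ℝ) ^ 4 * w.trace)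
      ≤ (lam p)⁻¹ * (∑ k, ∑ l, B p k l * u k * u l) := by
    intro p
    set d : ℝ := lam p * c p with hd
    set a : Fin n → ℝ := fun k => u k - d * v p k with ha
    have hukd : ∀ k, u k = a k + d * v p k := fun k => by simp [ha]
    set QA : ℝ := ∑ k, ∑ l, B p k l * a k * a l with hQA
    set QB : ℝ := ∑ k, ∑ l, B p k l * a k * v p l with hQB
    set QC : ℝ := ∑ k, ∑ l, B p k l * v p k * a l with hQC
    set QD : ℝ := ∑ k, ∑ l, B p k l * v p k * v p l with hQD
    have hexp : (∑ k, ∑ l, B p k l * u k * u l)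
        = QA + d * QB + d * QC + d ^ 2 * QD := by
      rw [show (∑ k, ∑ l, B p k l * u k * u l)
          = ∑ k, ∑ l, B p k l * (a k + d * v p k) * (a l + d * v p l) from
        Finset.sum_congr rfl fun k _ => Finset.sum_congr rfl fun l _ => by
          rw [← hukd k, ← hukd l]]
      exact bilin_expand _ _ _ _
    have hudotv : (∑ m, u m * v p m) = d := by
      calc ∑ m, u m * v p m = ∑ m, ∑ q, lam q * c q * v q m * v p m := by
            refine Finset.sum_congr rfl fun m _ => ?_
            rw [huq m, Finset.sum_mul]
        _ = ∑ q, ∑ m, lam q * c q * v q m * v p m := Finset.sum_comm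
        _ = ∑ q, lam q * c q * ∑ m, v q m * v p m := by
            refine Finset.sum_congr rfl fun q _ => ?_
            rw [Finset.mul_sum Finset.univ (fun m => v q m * v p m) (lam q * c q)]
            apply Finset.sum_congr rfl
            intro m _
            ring
        _ = d := by
            rw [hd]
            simp only [hOB, mul_ite, mul_one, mul_zero]
            simp [Finset.sum_ite_eq']
    have haperp : (∑ m, a m * v p m) = 0 := by
      have h1 : (∑ m, a m * v p m)
          = (∑ m, u m * v p m) - d * ∑ m, v p m * v p m := by
        rw [Finset.mul_sum, ← Finset.sum_sub_distrib]
        refine Finset.sum_congr rfl fun m _ => ?_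
        show (u m - d * v p m) * v p m = _
        ring
      rw [h1, hudotv, hOB p p]
      simp
    have hQaa : 0 ≤ QA := by
      have h0 := hMTW (WithLp.toLp 2 a) (v p)
        (by rw [hinner]; exact haperp)
      calc (0:ℝ) ≤ ∑ k, ∑ l, ∑ i, ∑ j, Apq k l i j * a k * a l * v p i * v p j := h0
        _ = QA := by
            refine Finset.sum_congr rfl fun k _ => Finset.sum_congr rfl fun l _ => ?_
            show _ = (∑ i, ∑ j, Apq k l i j * v p i * v p j) * a k * a l
            rw [Finset.sum_mul, Finset.sum_mul]
            refine Finset.sum_congr rfl fun i _ => ?_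
            rw [Finset.sum_mul, Finset.sum_mul]
            refine Finset.sum_congr rfl fun j _ => ?_
            ring
    have hdle : |d| ≤ w.trace := by
      rw [hd, abs_mul, abs_of_pos (hlampos p)]
      calc lam p * |c p| ≤ lam p * 1 :=
            mul_le_mul_of_nonneg_left (hcle p) (hlampos p).le
        _ = lam p := mul_one _
        _ ≤ w.trace := hlamle p
    have hal1 : (∑ k, |a k|) ≤ 2 * (n:ℝ) * w.trace := by
      calc ∑ k, |a k| ≤ ∑ k, (|u k| + |d| * |v p k|) := by
            refine Finset.sum_le_sum fun k _ => ?_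
            calc |a k| = |u k - d * v p k| := by rw [ha]
              _ ≤ |u k| + |d * v p k| := abs_sub _ _
              _ = |u k| + |d| * |v p k| := by rw [abs_mul]
        _ = (∑ k, |u k|) + |d| * ∑ k, |v p k| := by
            rw [Finset.sum_add_distrib, Finset.mul_sum]
        _ ≤ (n:ℝ) * w.trace + w.trace * (n:ℝ) := by
            have h2 : |d| * (∑ k, |v p k|) ≤ w.trace * (n:ℝ) :=
              mul_le_mul hdle (hvsum p)
                (Finset.sum_nonneg fun k _ => abs_nonneg _) htrnn
            linarith [hul1]
        _ = 2 * (n:ℝ) * w.trace := by ring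
    have hKnn : (0:ℝ) ≤ C₀ * (n:ℝ) ^ 2 := by positivity
    have htr2nn : (0:ℝ) ≤ 2 * (n:ℝ) * w.trace := by
      have := Nat.cast_nonneg (α := ℝ) n
      nlinarith
    have hQavb : |QB| ≤ 2 * C₀ * (n:ℝ) ^ 4 * w.trace := by
      have h := abs_bilin_le (B p) a (fun l => v p l) (C₀ * (n:ℝ) ^ 2) hKnn (hBbd p)
      calc |QB| ≤ C₀ * (n:ℝ) ^ 2 * (∑ k, |a k|) * (∑ l, |v p l|) := h
        _ ≤ C₀ * (n:ℝ) ^ 2 * (2 * (n:ℝ) * w.trace) * (n:ℝ) := by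
            refine mul_le_mul (mul_le_mul_of_nonneg_left hal1 hKnn) (hvsum p)
              (Finset.sum_nonneg fun l _ => abs_nonneg _) ?_
            exact mul_nonneg hKnn htr2nn
        _ = 2 * C₀ * (n:ℝ) ^ 4 * w.trace := by ring
    have hQvab : |QC| ≤ 2 * C₀ * (n:ℝ) ^ 4 * w.trace := by
      have h := abs_bilin_le (B p) (fun k => v p k) a (C₀ * (n:ℝ) ^ 2) hKnn (hBbd p)
      calc |QC| ≤ C₀ * (n:ℝ) ^ 2 * (∑ k, |v p k|) * (∑ l, |a l|) := h
        _ ≤ C₀ * (n:ℝ) ^ 2 * (n:ℝ) * (2 * (n:ℝ) * w.trace) := by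
            refine mul_le_mul (mul_le_mul_of_nonneg_left (hvsum p) hKnn) hal1
              (Finset.sum_nonneg fun l _ => abs_nonneg _) ?_
            exact mul_nonneg hKnn (Nat.cast_nonneg n)
        _ = 2 * C₀ * (n:ℝ) ^ 4 * w.trace := by ring
    have hQvvb : |QD| ≤ C₀ * (n:ℝ) ^ 4 := by
      have h := abs_bilin_le (B p) (fun k => v p k) (fun l => v p l)
        (C₀ * (n:ℝ) ^ 2) hKnn (hBbd p)
      calc |QD| ≤ C₀ * (n:ℝ) ^ 2 * (∑ k, |v p k|) * (∑ l, |v p l|) := h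
        _ ≤ C₀ * (n:ℝ) ^ 2 * (n:ℝ) * (n:ℝ) := by
            refine mul_le_mul (mul_le_mul_of_nonneg_left (hvsum p) hKnn) (hvsum p)
              (Finset.sum_nonneg fun l _ => abs_nonneg _) ?_
            exact mul_nonneg hKnn (Nat.cast_nonneg n)
        _ = C₀ * (n:ℝ) ^ 4 := by ring
    have hcd : |(lam p)⁻¹ * d| ≤ 1 := by
      rw [hd, inv_mul_cancel_left₀ (hlampos p).ne']
      exact hcle p
    have hz0 : 0 ≤ (lam p)⁻¹ * d ^ 2 :=
      mul_nonneg (inv_nonneg.mpr (hlampos p).le) (sq_nonneg d)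
    have hzT : (lam p)⁻¹ * d ^ 2 ≤ w.trace := by
      rw [hd]
      have h1 : (lam p)⁻¹ * (lam p * c p) ^ 2 = lam p * c p ^ 2 := by
        have hne : lam p ≠ 0 := (hlampos p).ne'
        field_simp
      rw [h1]
      have h2 : c p ^ 2 ≤ 1 := by
        nlinarith [hcle p, abs_nonneg (c p), sq_abs (c p)]
      calc lam p * c p ^ 2 ≤ lam p * 1 :=
            mul_le_mul_of_nonneg_left h2 (hlampos p).le
        _ = lam p := mul_one _
        _ ≤ w.trace := hlamle p
    have e0 : 0 ≤ (lam p)⁻¹ * QA :=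
      mul_nonneg (inv_nonneg.mpr (hlampos p).le) hQaa
    have e1 : -(2 * C₀ * (n:ℝ) ^ 4 * w.trace) ≤ ((lam p)⁻¹ * d) * QB :=
      neg_le_mul' _ _ _ hcd hQavb
    have e2 : -(2 * C₀ * (n:ℝ) ^ 4 * w.trace) ≤ ((lam p)⁻¹ * d) * QC :=
      neg_le_mul' _ _ _ hcd hQvab
    have e3 : -(w.trace * (C₀ * (n:ℝ) ^ 4)) ≤ ((lam p)⁻¹ * d ^ 2) * QD :=
      neg_le_mul'' _ _ _ _ hz0 hzT hQvvb (by positivity)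
    have hsplit : (lam p)⁻¹ * (QA + d * QB + d * QC + d ^ 2 * QD)
        = (lam p)⁻¹ * QA + ((lam p)⁻¹ * d) * QB + ((lam p)⁻¹ * d) * QC
          + ((lam p)⁻¹ * d ^ 2) * QD := by ring
    rw [hexp, hsplit]
    linarith [e0, e1, e2, e3]
  rw [hS]
  calc -(5 * C₀ * (n:ℝ) ^ 5 + 1) * w.trace
      ≤ ∑ _p : Fin n, -(5 * C₀ * (n:ℝ) ^ 4 * w.trace) := by
        rw [Finset.sum_const, Finset.card_univ, Fintype.card_fin, nsmul_eq_mul]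
        nlinarith [htrnn]
    _ ≤ ∑ p, (lam p)⁻¹ * (∑ k, ∑ l, B p k l * u k * u l) :=
        Finset.sum_le_sum fun p _ => key p
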